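/- Every simple iH₃△-algebra (an algebra with more than one element whose only modal deductive systems are {1} and the whole algebra) is isomorphic either to C₃ or to its two-element subalgebra C₂ on {0,1}; thus C₃ and C₂ are the unique simple iH₃△-algebras up to isomorphism. -/
import Mathlib


class iH3 (A : Type*) extends One A where
  imp : A → A → A
  inf : A → A → A
  h1 : ∀ x y : A, imp x (imp y x) = 1
  h2 : ∀ x y z : A, imp (imp x (imp y z)) (imp (imp x y) (imp x z)) = 1
  h3 : ∀ x y : A, imp x y = 1 → imp y x = 1 → x = y
  it3 : ∀ x y z : A, imp (imp (imp x y) z) (imp (imp (imp z x) z) z) = 1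
  ih1 : ∀ x y z : A, inf x (inf y z) = inf (inf x y) z
  ih2 : ∀ x : A, inf x x = x
  ih3 : ∀ x y : A, inf x (imp x y) = inf x y
  ih4 : ∀ x y z : A, imp (imp x (inf y z)) (inf (imp x z) (imp x y)) = 1

class iH3D (A : Type*) extends iH3 A where
  box : A → A
  m1 : ∀ x : A, imp (box x) x = 1
  m2 : ∀ x y : A, imp (imp (imp y (box y)) (imp x (box (box x)))) (box (imp x y)) = imp (box x) (box (box y))
  m3 : ∀ x y : A, imp (imp (box x) (box y)) (box x) = box x

inductive C3 : Type
  | zero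
  | half
  | one
  deriving DecidableEq

namespace C3

def imp : C3 → C3 → C3
  | zero, _ => one
  | half, zero => zero
  | half, _ => one
  | one, y => y

def inf : C3 → C3 → C3
  | zero, _ => zero
  | half, zero => zero
  | half, _ => half
  | one, y => y

def sup : C3 → C3 → C3
  | zero, y => y
  | half, one => one
  | half, _ => half
  | one, _ => one

def box : C3 → C3
  | one => one
  | _ => zero

end C3

inductive C2 : Type
  | zero
  | one
  deriving DecidableEq

namespace C2

def imp : C2 → C2 → C2
  | zero, _ => one
  | one, y => y

def inf : C2 → C2 → C2
  | zero, _ => zero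
  | one, y => y

def sup : C2 → C2 → C2
  | zero, y => y
  | one, _ => one

def box : C2 → C2 := id

end C2

/-- A modal deductive system. -/
def isMDS {A : Type*} [iH3D A] (D : Set A) : Prop :=
  (1 : A) ∈ D ∧ (∀ x y : A, x ∈ D → iH3.imp x y ∈ D → y ∈ D) ∧
    (∀ x : A, x ∈ D → iH3D.box x ∈ D)


section AuxLemmas

variable {A : Type*} [iH3D A]

lemma aux_mp {a b : A} (h : iH3.imp a b = 1) (ha : a = 1) : b = 1 := by
  subst ha
  have h2 := iH3.h1 b (1 : A)
  rw [h] at h2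
  exact (iH3.h3 1 b h h2).symm

lemma aux_imp_self (a : A) : iH3.imp a a = 1 := by
  have s := iH3.h2 a (iH3.imp a a) a
  have step := aux_mp s (iH3.h1 a (iH3.imp a a))
  exact aux_mp step (iH3.h1 a a)

lemma aux_imp_one (a : A) : iH3.imp a 1 = 1 := aux_mp (iH3.h1 1 a) rfl

lemma aux_one_imp (a : A) : iH3.imp (1 : A) a = a := by
  have s := iH3.h2 (iH3.imp 1 a) 1 a
  have t1 := aux_mp s (aux_imp_self (iH3.imp 1 a))
  have t2 := aux_mp t1 (aux_imp_one (iH3.imp 1 a))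
  exact iH3.h3 _ _ t2 (iH3.h1 a 1)

lemma aux_le_trans {a b c : A} (hab : iH3.imp a b = 1) (hbc : iH3.imp b c = 1) :
    iH3.imp a c = 1 := by
  have s := iH3.h2 a b c
  have t : iH3.imp a (iH3.imp b c) = 1 := by rw [hbc]; exact aux_imp_one a
  exact aux_mp (aux_mp s t) hab

lemma aux_inf_one (a : A) : iH3.inf a 1 = a := by
  have h := iH3.ih3 a a
  rw [aux_imp_self a, iH3.ih2 a] at h
  exact h

lemma aux_inf_eq_left {a b : A} (h : iH3.imp a b = 1) : iH3.inf a b = a := by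
  have h3 := iH3.ih3 a b
  rw [h, aux_inf_one] at h3
  exact h3.symm

lemma aux_inf_comm_le (y z : A) : iH3.imp (iH3.inf y z) (iH3.inf z y) = 1 := by
  have h := iH3.ih4 1 y z
  rw [aux_one_imp, aux_one_imp, aux_one_imp] at h
  exact h

lemma aux_inf_comm (y z : A) : iH3.inf y z = iH3.inf z y :=
  iH3.h3 _ _ (aux_inf_comm_le y z) (aux_inf_comm_le z y)

lemma aux_inf_eq_right {a b : A} (h : iH3.imp a b = 1) : iH3.inf b a = a := by
  rw [aux_inf_comm]; exact aux_inf_eq_left h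

lemma aux_box_one : iH3D.box (1 : A) = 1 := by
  have hm2 := iH3D.m2 (1 : A) (1 : A)
  simp only [aux_one_imp] at hm2
  have hm3 := iH3D.m3 (1 : A) (iH3D.box (1 : A))
  have he : iH3D.box (1 : A)
      = iH3.imp (iH3D.box (1 : A)) (iH3D.box (iH3D.box (1 : A))) := hm3.symm.trans hm2
  have h1 : iH3.inf (iH3D.box (1 : A)) (iH3D.box (iH3D.box (1 : A)))
      = iH3D.box (iH3D.box (1 : A)) := aux_inf_eq_right (iH3D.m1 _)
  have h2 := iH3.ih3 (iH3D.box (1 : A)) (iH3D.box (iH3D.box (1 : A)))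
  rw [← he, iH3.ih2, h1] at h2
  rw [← h2] at he
  rw [aux_imp_self] at he
  exact he

lemma aux_box_box (x : A) : iH3D.box (iH3D.box x) = iH3D.box x := by
  have hm2 := iH3D.m2 x x
  rw [aux_imp_self x, aux_box_one, aux_imp_one] at hm2
  exact iH3.h3 _ _ (iH3D.m1 (iH3D.box x)) hm2.symm

lemma aux_box_mono {x y : A} (h : iH3.imp x y = 1) :
    iH3.imp (iH3D.box x) (iH3D.box y) = 1 := by
  have hm2 := iH3D.m2 x y
  rw [h, aux_box_one, aux_imp_one, aux_box_box] at hm2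
  exact hm2.symm

lemma aux_box_mp {x y : A} (hx : iH3D.box x = 1) (hxy : iH3D.box (iH3.imp x y) = 1) :
    iH3D.box y = 1 := by
  have hm2 := iH3D.m2 x y
  rw [hxy, aux_imp_one, aux_box_box, hx, aux_one_imp] at hm2
  exact hm2.symm

end AuxLemmas

set_option maxHeartbeats 1600000

/-- Every simple iH₃△-algebra (more than one element, and whose only modal
deductive systems are `{1}` and the whole algebra) is isomorphic to `C₃` or to
its two-element subalgebra `C₂`. -/
theorem stmt11 {A : Type*} [iH3D A] (hnt : ∃ x y : A, x ≠ y)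
    (hsimple : ∀ D : Set A, isMDS D → D = {(1 : A)} ∨ D = Set.univ) :
    (∃ f : A → C3, Function.Bijective f ∧
      (∀ x y : A, f (iH3.imp x y) = C3.imp (f x) (f y)) ∧
      (∀ x y : A, f (iH3.inf x y) = C3.inf (f x) (f y)) ∧
      (∀ x : A, f (iH3D.box x) = C3.box (f x)) ∧ f 1 = C3.one) ∨
    (∃ f : A → C2, Function.Bijective f ∧
      (∀ x y : A, f (iH3.imp x y) = C2.imp (f x) (f y)) ∧
      (∀ x y : A, f (iH3.inf x y) = C2.inf (f x) (f y)) ∧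
      (∀ x : A, f (iH3D.box x) = C2.box (f x)) ∧ f 1 = C2.one) := by
  classical
  obtain ⟨x₀, y₀, hxy₀⟩ := hnt
  obtain ⟨a₀, ha₀⟩ : ∃ a : A, a ≠ 1 := by
    by_cases hx : x₀ = 1
    · exact ⟨y₀, fun h => hxy₀ (hx.trans h.symm)⟩
    · exact ⟨x₀, hx⟩
  -- Step 1: box x = 1 → x = 1
  have hboxiff : ∀ x : A, iH3D.box x = 1 → x = 1 := by
    have hmds : isMDS {x : A | iH3D.box x = 1} := by
      refine ⟨aux_box_one, fun x y hx hxy => aux_box_mp hx hxy, fun x hx => ?_⟩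
      show iH3D.box (iH3D.box x) = 1
      rw [aux_box_box]; exact hx
    rcases hsimple _ hmds with h | h
    · intro x hx
      have hmem : x ∈ ({(1 : A)} : Set A) := h ▸ hx
      simpa using hmem
    · exfalso
      have hall : iH3D.box a₀ = 1 := by
        have : a₀ ∈ {x : A | iH3D.box x = 1} := h ▸ Set.mem_univ a₀
        exact this
      have h1 := iH3D.m1 a₀
      rw [hall, aux_one_imp] at h1
      exact ha₀ h1
  -- Step 2: for a ≠ 1, box a is a bottom element
  have hbotgen : ∀ a : A, a ≠ 1 → ∀ y : A, iH3.imp (iH3D.box a) y = 1 := by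
    intro a ha
    have hmds : isMDS {y : A | iH3.imp (iH3D.box a) y = 1} := by
      refine ⟨aux_imp_one _, fun x y hx hxy => ?_, fun x hx => ?_⟩
      · exact aux_mp (aux_mp (iH3.h2 (iH3D.box a) x y) hxy) hx
      · show iH3.imp (iH3D.box a) (iH3D.box x) = 1
        have hb := aux_box_mono hx
        rwa [aux_box_box] at hb
    rcases hsimple _ hmds with h | h
    · exfalso
      have hmem : iH3D.box a ∈ {y : A | iH3.imp (iH3D.box a) y = 1} := aux_imp_self _
      rw [h] at hmem
      exact ha (hboxiff a (by simpa using hmem))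
    · intro y
      have : y ∈ {y : A | iH3.imp (iH3D.box a) y = 1} := h ▸ Set.mem_univ y
      exact this
  obtain ⟨z0, hbot, hz0ne1, hboxval⟩ :
      ∃ z0 : A, (∀ y : A, iH3.imp z0 y = 1) ∧ z0 ≠ 1 ∧
        (∀ x : A, x ≠ 1 → iH3D.box x = z0) := by
    refine ⟨iH3D.box a₀, hbotgen a₀ ha₀, fun h => ha₀ (hboxiff a₀ h), fun x hx => ?_⟩
    exact iH3.h3 _ _ (hbotgen x hx _) (hbotgen a₀ ha₀ _)
  -- Step 3: linearity
  have key1 : ∀ x y : A, x ≠ 1 → y ≠ 1 → iH3.imp x y ≠ 1 → iH3.imp x z0 = z0 := by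
    intro x y hx hy hxy
    have hm2 := iH3D.m2 x y
    rw [aux_box_box, aux_box_box, hboxval x hx, hboxval y hy, hboxval _ hxy,
      aux_imp_self] at hm2
    have hk : iH3.imp (iH3.imp x z0) z0 = 1 :=
      aux_le_trans (iH3.h1 (iH3.imp x z0) (iH3.imp y z0)) hm2
    exact iH3.h3 _ _ hk (hbot _)
  have hlin : ∀ x y : A, iH3.imp x y = 1 ∨ iH3.imp y x = 1 := by
    intro x y
    by_cases hx : x = 1
    · right; rw [hx]; exact aux_imp_one y
    by_cases hy : y = 1
    · left; rw [hy]; exact aux_imp_one x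
    by_cases hxy : iH3.imp x y = 1
    · left; exact hxy
    by_cases hyx : iH3.imp y x = 1
    · right; exact hyx
    exfalso
    have hx0 := key1 x y hx hy hxy
    have hy0 := key1 y x hy hx hyx
    have hm2 := iH3D.m2 x y
    rw [aux_box_box, aux_box_box, hboxval x hx, hboxval y hy, hboxval _ hxy,
      aux_imp_self, hx0, hy0, aux_imp_self, aux_one_imp] at hm2
    exact hz0ne1 hm2
  -- Step 4: Gödel implication
  have hgodel : ∀ x y : A, iH3.imp x y ≠ 1 → iH3.imp x y = y := by
    intro x y hxy
    have hyx : iH3.imp y x = 1 := (hlin x y).resolve_left hxy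
    have h3 := iH3.ih3 x y
    have hinfxy : iH3.inf x y = y := aux_inf_eq_right hyx
    rcases hlin x (iH3.imp x y) with h | h
    · exfalso
      have hxeq : x = y := by
        have h' := aux_inf_eq_left h
        rw [h', hinfxy] at h3; exact h3
      exact hxy (by rw [hxeq]; exact aux_imp_self y)
    · have h' := aux_inf_eq_right h
      rw [h', hinfxy] at h3; exact h3
  -- Step 5: at most one "middle" element
  have key2 : ∀ a b : A, b ≠ 1 → a ≠ z0 → iH3.imp a b = 1 → iH3.imp b a ≠ 1 → False := by
    intro a b hb1 haz hab hba
    have haz0 : iH3.imp a z0 = z0 := by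
      apply hgodel
      intro h
      exact haz (iH3.h3 _ _ h (hbot a))
    have hit := iH3.it3 a z0 b
    rw [haz0, hbot b, aux_one_imp, hgodel b a hba, hab, aux_one_imp] at hit
    exact hb1 hit
  have hthree : ∀ a b : A, a ≠ 1 → b ≠ 1 → a ≠ z0 → b ≠ z0 → a = b := by
    intro a b ha hb haz hbz
    by_contra hne
    rcases hlin a b with hab | hba
    · exact key2 a b hb haz hab (fun h => hne (iH3.h3 _ _ hab h))
    · exact key2 b a ha hbz hba (fun h => hne (iH3.h3 _ _ h hba))
  -- value tables
  have hinf_z0 : ∀ y : A, iH3.inf z0 y = z0 := fun y => aux_inf_eq_left (hbot y)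
  have hinf_z0' : ∀ y : A, iH3.inf y z0 = z0 := fun y => aux_inf_eq_right (hbot y)
  have hinf_one : ∀ y : A, iH3.inf 1 y = y := fun y => aux_inf_eq_right (aux_imp_one y)
  have hinf_one' : ∀ y : A, iH3.inf y 1 = y := fun y => aux_inf_eq_left (aux_imp_one y)
  by_cases hmid : ∃ m : A, m ≠ 1 ∧ m ≠ z0
  · -- three-element case: isomorphic to C3
    obtain ⟨m, hm1, hmz⟩ := hmid
    left
    have hzm : z0 ≠ m := fun h => hmz h.symm
    have htri : ∀ x : A, x = 1 ∨ x = m ∨ x = z0 := by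
      intro x
      by_cases h1 : x = 1; · exact Or.inl h1
      by_cases h2 : x = z0; · exact Or.inr (Or.inr h2)
      exact Or.inr (Or.inl (hthree x m h1 hm1 h2 hmz))
    have himpmz : iH3.imp m z0 = z0 := by
      apply hgodel; intro h; exact hmz (iH3.h3 _ _ h (hbot m))
    have hboxm : iH3D.box m = z0 := hboxval m hm1
    have hboxz : iH3D.box z0 = z0 := hboxval z0 hz0ne1
    have h1m : (1 : A) ≠ m := fun h => hm1 h.symm
    have h1z : (1 : A) ≠ z0 := fun h => hz0ne1 h.symm
    refine ⟨fun x => if x = 1 then C3.one else if x = m then C3.half else C3.zero,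
      ⟨?_, ?_⟩, ?_, ?_, ?_, ?_⟩
    · intro x y hxy
      rcases htri x with rfl | rfl | rfl <;> rcases htri y with rfl | rfl | rfl <;>
        [skip; skip; skip; skip; skip; skip; skip; skip; skip] <;>
        first
          | rfl
          | (simp only [hm1, hmz, hz0ne1, hzm, h1m, h1z, if_true, if_false,
              eq_self_iff_true, if_neg, if_pos, ite_true, ite_false] at hxy <;>
             simp at hxy)
    · intro c
      cases c
      · exact ⟨z0, by simp [hz0ne1, hzm]⟩
      · exact ⟨m, by simp [hm1]⟩
      · exact ⟨1, by simp⟩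
    · intro x y
      rcases htri x with rfl | rfl | rfl <;> rcases htri y with rfl | rfl | rfl <;>
        simp [aux_one_imp, aux_imp_one, aux_imp_self, hbot, himpmz,
          hm1, hmz, hz0ne1, hzm, h1m, h1z, C3.imp]
    · intro x y
      rcases htri x with rfl | rfl | rfl <;> rcases htri y with rfl | rfl | rfl <;>
        simp [hinf_z0, hinf_z0', hinf_one, hinf_one', iH3.ih2,
          hm1, hmz, hz0ne1, hzm, h1m, h1z, C3.inf]
    · intro x
      rcases htri x with rfl | rfl | rfl <;>
        simp [aux_box_one, hboxm, hboxz, hm1, hmz, hz0ne1, hzm, C3.box]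
    · simp
  · -- two-element case: isomorphic to C2
    right
    push_neg at hmid
    have htwo : ∀ x : A, x = 1 ∨ x = z0 := by
      intro x
      by_cases h1 : x = 1; · exact Or.inl h1
      exact Or.inr (hmid x h1)
    have hboxz : iH3D.box z0 = z0 := hboxval z0 hz0ne1
    have h1z : (1 : A) ≠ z0 := fun h => hz0ne1 h.symm
    refine ⟨fun x => if x = 1 then C2.one else C2.zero, ⟨?_, ?_⟩, ?_, ?_, ?_, ?_⟩
    · intro x y hxy
      rcases htwo x with rfl | rfl <;> rcases htwo y with rfl | rfl <;>
        first
          | rfl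
          | (simp only [hz0ne1, h1z, if_neg, if_pos, ite_true, ite_false,
              eq_self_iff_true] at hxy <;> simp at hxy)
    · intro c
      cases c
      · exact ⟨z0, by simp [hz0ne1]⟩
      · exact ⟨1, by simp⟩
    · intro x y
      rcases htwo x with rfl | rfl <;> rcases htwo y with rfl | rfl <;>
        simp [aux_one_imp, aux_imp_one, aux_imp_self, hbot, hz0ne1, h1z, C2.imp]
    · intro x y
      rcases htwo x with rfl | rfl <;> rcases htwo y with rfl | rfl <;>
        simp [hinf_z0, hinf_z0', hinf_one, hinf_one', iH3.ih2, hz0ne1, h1z, C2.inf]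
    · intro x
      rcases htwo x with rfl | rfl <;>
        simp [aux_box_one, hboxz, hz0ne1, C2.box]
    · simp
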